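/- arXiv:1102.3892 — 4 statements merged into one kernel-verified Lean document; each statement's English description precedes it below -/
import Mathlib

section
/- For every n ≥ 2, the assignment σ_i ↦ σ_{2i}·σ_{2i+1}·σ_{2i−1}^{−1}·σ_{2i}^{−1} (for 1 ≤ i ≤ n−1) extends to a group homomorphism Φ from the braid group B_n to the braid group B_{2n}. -/
noncomputable section

/-- Relators for Artin's braid group `B_n` on generators `σ 1, …, σ (n-1)`
(out-of-range generators are killed). -/
def braidRels (n : ℕ) : Set (FreeGroup ℕ) :=
  {x | ∃ i : ℕ, (i = 0 ∨ n ≤ i) ∧ x = FreeGroup.of i} ∪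
  {x | ∃ i j : ℕ, 1 ≤ i ∧ i + 1 < j ∧ j < n ∧
      x = FreeGroup.of i * FreeGroup.of j * (FreeGroup.of i)⁻¹ * (FreeGroup.of j)⁻¹} ∪
  {x | ∃ i : ℕ, 1 ≤ i ∧ i + 1 < n ∧
      x = FreeGroup.of i * FreeGroup.of (i + 1) * FreeGroup.of i *
          (FreeGroup.of (i + 1) * FreeGroup.of i * FreeGroup.of (i + 1))⁻¹}

/-- Artin's braid group `B_n`, presented by generators `σ_1, …, σ_{n-1}` with the braid
relations. -/
abbrev BraidGroup (n : ℕ) : Type := PresentedGroup (braidRels n)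

/-- The generator `σ_i` of the braid group `B_n`. -/
def bσ (n i : ℕ) : BraidGroup n := PresentedGroup.of i

/-! The images of `σ_i` and `σ_j` for `|i - j| ≥ 2` are words in two sets of generators of `B_{2n}`
that commute with each other, so they commute. For the braid relation, conjugation by
`σ_{2i} σ_{2i+2} σ_{2i+1}` carries the images of `σ_i` and `σ_{i+1}` to `σ_{2i+2} σ_{2i-1}⁻¹` and
`σ_{2i+3} σ_{2i}⁻¹`; these braid because `(σ_{2i+2}, σ_{2i+3})` and `(σ_{2i-1}⁻¹, σ_{2i}⁻¹)` are
braided pairs and every member of the first commutes with every member of the second. -/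

section BraidRelations

variable {G : Type*} [Group G]

theorem braid_inv {a b : G} (h : a * b * a = b * a * b) :
    a⁻¹ * b⁻¹ * a⁻¹ = b⁻¹ * a⁻¹ * b⁻¹ := by
  simpa only [mul_inv_rev, mul_assoc] using congrArg (·⁻¹) h

theorem braid_mul_of_commute {u₁ u₂ v₁ v₂ : G} (hu : u₁ * u₂ * u₁ = u₂ * u₁ * u₂)
    (hv : v₁ * v₂ * v₁ = v₂ * v₁ * v₂) (h₁₁ : Commute u₁ v₁) (h₁₂ : Commute u₁ v₂)
    (h₂₁ : Commute u₂ v₁) (h₂₂ : Commute u₂ v₂) :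
    u₁ * v₁ * (u₂ * v₂) * (u₁ * v₁) = u₂ * v₂ * (u₁ * v₁) * (u₂ * v₂) := by
  have separate : ∀ {x₁ x₂ y₁ y₂ : G}, Commute x₁ y₁ → Commute x₁ y₂ → Commute x₂ y₁ →
      x₁ * y₁ * (x₂ * y₂) * (x₁ * y₁) = x₁ * x₂ * x₁ * (y₁ * y₂ * y₁) := by
    intro x₁ x₂ y₁ y₂ h₁₁ h₁₂ h₂₁
    calc x₁ * y₁ * (x₂ * y₂) * (x₁ * y₁) = x₁ * (y₁ * x₂) * (y₂ * x₁) * y₁ := by group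
      _ = x₁ * x₂ * (y₁ * x₁) * (y₂ * y₁) := by rw [h₂₁.symm.eq, h₁₂.symm.eq]; group
      _ = x₁ * x₂ * x₁ * (y₁ * y₂ * y₁) := by rw [h₁₁.symm.eq]; group
  rw [separate h₁₁ h₁₂ h₂₁, separate h₂₂ h₂₁ h₁₂, hu, hv]

theorem braid_of_semiconjBy {g x y x' y' : G} (hx : SemiconjBy g x x') (hy : SemiconjBy g y y')
    (h : x * y * x = y * x * y) : x' * y' * x' = y' * x' * y' := by
  have hxyx := ((hx.mul_right hy).mul_right hx).eq
  have hyxy := ((hy.mul_right hx).mul_right hy).eq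
  rw [h] at hxyx
  exact mul_right_cancel (hxyx.symm.trans hyxy)

theorem braid_doubled {a b c d e : G} (hab : a * b * a = b * a * b) (hbc : b * c * b = c * b * c)
    (hcd : c * d * c = d * c * d) (hde : d * e * d = e * d * e)
    (hac : Commute a c) (had : Commute a d) (hae : Commute a e)
    (hbd : Commute b d) (hbe : Commute b e) (hce : Commute c e) :
    b * c * a⁻¹ * b⁻¹ * (d * e * c⁻¹ * d⁻¹) * (b * c * a⁻¹ * b⁻¹) =
      d * e * c⁻¹ * d⁻¹ * (b * c * a⁻¹ * b⁻¹) * (d * e * c⁻¹ * d⁻¹) := by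
  have hx : SemiconjBy (b * d * c) (d * a⁻¹) (b * c * a⁻¹ * b⁻¹) := by
    calc b * d * c * (d * a⁻¹) = b * (d * c * d) * a⁻¹ := by group
      _ = b * c * (d * c * a⁻¹) := by rw [← hcd]; group
      _ = b * c * (a⁻¹ * (d * c)) := by rw [(had.mul_right hac).inv_left.symm.eq]
      _ = b * c * a⁻¹ * b⁻¹ * (b * d * c) := by group
  have hy : SemiconjBy (b * d * c) (e * b⁻¹) (d * e * c⁻¹ * d⁻¹) := by
    calc b * d * c * (e * b⁻¹) = d * (b * c * e) * b⁻¹ := by rw [hbd.eq]; group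
      _ = d * e * (c⁻¹ * (c * b * c) * b⁻¹) := by rw [(hbe.mul_left hce).eq]; group
      _ = d * e * c⁻¹ * (d⁻¹ * (d * b)) * c := by rw [← hbc]; group
      _ = d * e * c⁻¹ * d⁻¹ * (b * d * c) := by rw [← hbd.eq]; group
  exact braid_of_semiconjBy hx hy <| braid_mul_of_commute hde (braid_inv hab)
    had.symm.inv_right hbd.symm.inv_right hae.symm.inv_right hbe.symm.inv_right

end BraidRelations

section BraidGroup

variable {m i j : ℕ}

theorem bσ_eq_one (h : i = 0 ∨ m ≤ i) : bσ m i = 1 :=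
  PresentedGroup.one_of_mem (Or.inl (Or.inl ⟨i, h, rfl⟩))

theorem bσ_commute (h : i + 1 < j) : Commute (bσ m i) (bσ m j) := by
  rcases Nat.eq_zero_or_pos i with rfl | hi
  · rw [bσ_eq_one (Or.inl rfl)]
    exact Commute.one_left _
  rcases lt_or_ge j m with hj | hj
  · have hrel : _ = (1 : BraidGroup m) :=
      PresentedGroup.one_of_mem (Or.inl (Or.inr ⟨i, j, hi, h, hj, rfl⟩))
    simp only [map_mul, map_inv] at hrel
    exact mul_inv_eq_iff_eq_mul.mp (mul_inv_eq_one.mp hrel)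
  · rw [bσ_eq_one (Or.inr hj)]
    exact Commute.one_right _

theorem bσ_braid (hi : 1 ≤ i) (hij : i + 1 = j) (hj : j < m) :
    bσ m i * bσ m j * bσ m i = bσ m j * bσ m i * bσ m j := by
  subst hij
  have hrel : _ = (1 : BraidGroup m) := PresentedGroup.one_of_mem (Or.inr ⟨i, hi, hj, rfl⟩)
  simp only [map_mul, map_inv] at hrel
  exact mul_inv_eq_one.mp hrel

def doubledGen (m i : ℕ) : BraidGroup m :=
  bσ m (2 * i) * bσ m (2 * i + 1) * (bσ m (2 * i - 1))⁻¹ * (bσ m (2 * i))⁻¹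

theorem doubledGen_commute_of_forall {y : BraidGroup m}
    (h : ∀ p, 2 * i - 1 ≤ p → p ≤ 2 * i + 1 → Commute (bσ m p) y) :
    Commute (doubledGen m i) y := by
  have hb := h (2 * i) (by omega) (by omega)
  exact (((hb.mul_left (h _ (by omega) le_rfl)).mul_left
    (h _ le_rfl (by omega)).inv_left).mul_left hb.inv_left)

theorem doubledGen_commute (hij : i + 1 < j) :
    Commute (doubledGen m i) (doubledGen m j) :=
  doubledGen_commute_of_forall fun _ _ hp =>
    (doubledGen_commute_of_forall fun _ hq _ => (bσ_commute (by omega)).symm).symm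

theorem doubledGen_braid (hi : 1 ≤ i) (hm : 2 * i + 3 < m) :
    doubledGen m i * doubledGen m (i + 1) * doubledGen m i =
      doubledGen m (i + 1) * doubledGen m i * doubledGen m (i + 1) := by
  have hsucc : doubledGen m (i + 1) =
      bσ m (2 * i + 2) * bσ m (2 * i + 3) * (bσ m (2 * i + 1))⁻¹ * (bσ m (2 * i + 2))⁻¹ := by
    rw [doubledGen, show 2 * (i + 1) = 2 * i + 2 by ring, show 2 * i + 2 - 1 = 2 * i + 1 by omega]
  rw [hsucc, doubledGen]
  exact braid_doubled (bσ_braid (by omega) (by omega) (by omega))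
    (bσ_braid (by omega) (by omega) (by omega)) (bσ_braid (by omega) rfl (by omega))
    (bσ_braid (by omega) rfl (by omega)) (bσ_commute (by omega)) (bσ_commute (by omega))
    (bσ_commute (by omega)) (bσ_commute (by omega)) (bσ_commute (by omega))
    (bσ_commute (by omega))

/-- The generators `σ_i` of `B_n` outside `1 ≤ i < n` are trivial, so they must go to `1`. -/
def doublingGens (n i : ℕ) : BraidGroup (2 * n) :=
  if 1 ≤ i ∧ i < n then doubledGen (2 * n) i else 1

theorem doublingGens_of_mem {n i : ℕ} (h₁ : 1 ≤ i) (h₂ : i < n) :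
    doublingGens n i = doubledGen (2 * n) i :=
  if_pos ⟨h₁, h₂⟩

theorem lift_doublingGens_of_mem_braidRels (n : ℕ) :
    ∀ r ∈ braidRels n, FreeGroup.lift (doublingGens n) r = 1 := by
  rintro r ((⟨i, hi, rfl⟩ | ⟨i, j, hi, hij, hj, rfl⟩) | ⟨i, hi, hin, rfl⟩)
  · rw [FreeGroup.lift_apply_of, doublingGens, if_neg (by omega)]
  · simp only [map_mul, map_inv, FreeGroup.lift_apply_of]
    rw [doublingGens_of_mem hi (by omega), doublingGens_of_mem (by omega) hj]
    exact (doubledGen_commute hij).commutator_eq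
  · simp only [map_mul, map_inv, FreeGroup.lift_apply_of]
    rw [doublingGens_of_mem hi (by omega), doublingGens_of_mem (by omega) hin]
    exact mul_inv_eq_one.mpr (doubledGen_braid hi (by omega))

end BraidGroup

theorem stmt0_general (n : ℕ) :
    ∃ Φ : BraidGroup n →* BraidGroup (2 * n),
      ∀ i : ℕ, 1 ≤ i → i ≤ n - 1 →
        Φ (bσ n i) = bσ (2 * n) (2 * i) * bσ (2 * n) (2 * i + 1) *
          (bσ (2 * n) (2 * i - 1))⁻¹ * (bσ (2 * n) (2 * i))⁻¹ := by
  refine ⟨PresentedGroup.toGroup (lift_doublingGens_of_mem_braidRels n), fun i h₁ h₂ => ?_⟩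
  rw [bσ, PresentedGroup.toGroup.of, doublingGens_of_mem h₁ (by omega), doubledGen]

/-- `σ_i ↦ σ_{2i} σ_{2i+1} σ_{2i-1}⁻¹ σ_{2i}⁻¹` extends to a group
homomorphism `Φ : B_n → B_{2n}`. -/
theorem stmt0 (n : ℕ) (hn : 2 ≤ n) :
    ∃ Φ : BraidGroup n →* BraidGroup (2 * n),
      ∀ i : ℕ, 1 ≤ i → i ≤ n - 1 →
        Φ (bσ n i) = bσ (2 * n) (2 * i) * bσ (2 * n) (2 * i + 1) *
          (bσ (2 * n) (2 * i - 1))⁻¹ * (bσ (2 * n) (2 * i))⁻¹ :=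
  stmt0_general n
end
end

section
/- Let R be a commutative ring with invertible elements q, r ∈ R and an element δ ∈ R with (q−1)·δ = r−1. Then there exists an R-algebra homomorphism π from the q-Brauer algebra Br_3(r,q) to the algebra of 3×3 matrices over R determined by π(g_1) = [[q,0,0],[0,0,q],[0,1,q−1]], π(g_2) = [[0,q,0],[1,q−1,0],[0,0,q]], and π(e) = [[δ,r,rq],[0,0,0],[0,0,0]]; that is, these three matrices satisfy all the defining relations of Br_3(r,q). -/
noncomputable section

namespace qB

/-- Generators of the q-Brauer algebra: `g i` (intended for `1 ≤ i ≤ n-1`) and `e`. -/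
inductive BrGen : Type
  | g : ℕ → BrGen
  | e : BrGen

/-- The generator `g i` inside the free algebra. -/
def fg (R : Type) [CommRing R] (i : ℕ) : FreeAlgebra R BrGen := FreeAlgebra.ι R (BrGen.g i)

/-- The generator `e` inside the free algebra. -/
def fe (R : Type) [CommRing R] : FreeAlgebra R BrGen := FreeAlgebra.ι R BrGen.e

/-- The element `g i ⁻¹ = q⁻¹ g i + (q⁻¹ - 1)·1` inside the free algebra (`qi = q⁻¹`). -/
def fgInv (R : Type) [CommRing R] (qi : R) (i : ℕ) : FreeAlgebra R BrGen :=
  qi • fg R i + (qi - 1) • (1 : FreeAlgebra R BrGen)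

/-- The word `g 2 * g 3 * (g 1)⁻¹ * (g 2)⁻¹`. -/
def fE2w (R : Type) [CommRing R] (qi : R) : FreeAlgebra R BrGen :=
  fg R 2 * fg R 3 * fgInv R qi 1 * fgInv R qi 2

/-- Defining relations of the q-Brauer algebra `Br_n(r,q)`; out-of-range generators are
killed (relation `zero`), so the algebra is presented exactly on `g 1, …, g (n-1), e`. -/
inductive BrRel (R : Type) [CommRing R] (n : ℕ) (q qi r δ : R) :
    FreeAlgebra R BrGen → FreeAlgebra R BrGen → Prop
  | zero (i : ℕ) (h : i = 0 ∨ n ≤ i) : BrRel R n q qi r δ (fg R i) 0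
  | quad (i : ℕ) (h1 : 1 ≤ i) (h2 : i < n) :
      BrRel R n q qi r δ (fg R i * fg R i)
        ((q - 1) • fg R i + q • (1 : FreeAlgebra R BrGen))
  | comm (i j : ℕ) (h1 : 1 ≤ i) (h2 : i + 1 < j) (h3 : j < n) :
      BrRel R n q qi r δ (fg R i * fg R j) (fg R j * fg R i)
  | braid (i : ℕ) (h1 : 1 ≤ i) (h2 : i + 1 < n) :
      BrRel R n q qi r δ (fg R i * fg R (i + 1) * fg R i)
        (fg R (i + 1) * fg R i * fg R (i + 1))
  | e1 : BrRel R n q qi r δ (fe R * fe R) (δ • fe R)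
  | e2comm (i : ℕ) (h1 : 3 ≤ i) (h2 : i < n) :
      BrRel R n q qi r δ (fe R * fg R i) (fg R i * fe R)
  | e2g1 (h : 2 ≤ n) : BrRel R n q qi r δ (fe R * fg R 1) (q • fe R)
  | e2g2 (h : 3 ≤ n) : BrRel R n q qi r δ (fe R * fg R 2 * fe R) (r • fe R)
  | e2g2inv (h : 3 ≤ n) : BrRel R n q qi r δ (fe R * fgInv R qi 2 * fe R) (qi • fe R)
  | e3l (h : 4 ≤ n) :
      BrRel R n q qi r δ (fE2w R qi * (fe R * fE2w R qi * fe R)) (fe R * fE2w R qi * fe R)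
  | e3r (h : 4 ≤ n) :
      BrRel R n q qi r δ ((fe R * fE2w R qi * fe R) * fE2w R qi) (fe R * fE2w R qi * fe R)

/-- The q-Brauer algebra `Br_n(r,q)` over `R`, with `qi = q⁻¹` and `δ = (r-1)/(q-1)`. -/
abbrev QBr (R : Type) [CommRing R] (n : ℕ) (q qi r δ : R) : Type :=
  RingQuot (BrRel R n q qi r δ)

/-- The generator `g i` of the q-Brauer algebra. -/
def G (R : Type) [CommRing R] (n : ℕ) (q qi r δ : R) (i : ℕ) : QBr R n q qi r δ :=
  RingQuot.mkAlgHom R (BrRel R n q qi r δ) (fg R i)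

/-- The generator `e` of the q-Brauer algebra. -/
def E (R : Type) [CommRing R] (n : ℕ) (q qi r δ : R) : QBr R n q qi r δ :=
  RingQuot.mkAlgHom R (BrRel R n q qi r δ) (fe R)

/-- The inverse `(g i)⁻¹ = q⁻¹ g i + (q⁻¹-1)` of the generator `g i`. -/
def GInv (R : Type) [CommRing R] (n : ℕ) (q qi r δ : R) (i : ℕ) : QBr R n q qi r δ :=
  RingQuot.mkAlgHom R (BrRel R n q qi r δ) (fgInv R qi i)

/-- Ascending product `g a * g (a+1) * ⋯ * g b` (equal to `1` when `b < a`). -/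
def ga (R : Type) [CommRing R] (n : ℕ) (q qi r δ : R) (a b : ℕ) : QBr R n q qi r δ :=
  ((List.range' a (b + 1 - a)).map (G R n q qi r δ)).prod

/-- Ascending product of inverses `(g a)⁻¹ * (g (a+1))⁻¹ * ⋯ * (g b)⁻¹`. -/
def gaInv (R : Type) [CommRing R] (n : ℕ) (q qi r δ : R) (a b : ℕ) : QBr R n q qi r δ :=
  ((List.range' a (b + 1 - a)).map (GInv R n q qi r δ)).prod

/-- Descending product `g a * g (a-1) * ⋯ * g b` (equal to `1` when `a < b`). -/
def gd (R : Type) [CommRing R] (n : ℕ) (q qi r δ : R) (a b : ℕ) : QBr R n q qi r δ :=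
  ((List.range' b (a + 1 - b)).reverse.map (G R n q qi r δ)).prod

/-- Descending product of inverses `(g a)⁻¹ * (g (a-1))⁻¹ * ⋯ * (g b)⁻¹`. -/
def gdInv (R : Type) [CommRing R] (n : ℕ) (q qi r δ : R) (a b : ℕ) : QBr R n q qi r δ :=
  ((List.range' b (a + 1 - b)).reverse.map (GInv R n q qi r δ)).prod

/-- The elements `e_(k)`: `e_(0) = 1`, `e_(1) = e`,
`e_(k+1) = e * (g 2 ⋯ g (2k+1)) * (g 1)⁻¹ ⋯ (g 2k)⁻¹ * e_(k)`. -/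
def ek (R : Type) [CommRing R] (n : ℕ) (q qi r δ : R) : ℕ → QBr R n q qi r δ
  | 0 => 1
  | k + 1 => E R n q qi r δ * ga R n q qi r δ 2 (2 * k + 1) *
      gaInv R n q qi r δ 1 (2 * k) * ek R n q qi r δ k

end qB

/-!
A representation of `Br_3(r,q)` is the same as three elements `g₁ g₂ e` of an algebra satisfying
the relations (H), (E1) and (E2) with `n = 3`: the far commutations and (E3) are vacuous, and
`e g₂⁻¹ e = q⁻¹ e` is implied by `e g₂ e = r e`, `e² = δ e` and `(q - 1) δ = r - 1`. The three
given matrices satisfy these relations by direct computation.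
-/

namespace qB

section UniversalProperty

variable {R : Type} [CommRing R] {q qi r δ : R} {A : Type} [Ring A] [Algebra R A]

def brThreeGens (g₁ g₂ e' : A) : BrGen → A
  | .g i => if i = 1 then g₁ else if i = 2 then g₂ else 0
  | .e => e'

structure BrThreeRelations (q r δ : R) (g₁ g₂ e' : A) : Prop where
  sq_gOne : g₁ * g₁ = (q - 1) • g₁ + q • (1 : A)
  sq_gTwo : g₂ * g₂ = (q - 1) • g₂ + q • (1 : A)
  braid : g₁ * g₂ * g₁ = g₂ * g₁ * g₂
  e_mul_self : e' * e' = δ • e'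
  e_mul_gOne : e' * g₁ = q • e'
  e_mul_gTwo_mul_e : e' * g₂ * e' = r • e'

variable {g₁ g₂ e' : A}

theorem BrThreeRelations.e_mul_gTwoInv_mul_e (h : BrThreeRelations q r δ g₁ g₂ e')
    (hq : q * qi = 1) (hδ : (q - 1) * δ = r - 1) :
    e' * (qi • g₂ + (qi - 1) • (1 : A)) * e' = qi • e' :=
  calc e' * (qi • g₂ + (qi - 1) • (1 : A)) * e'
      = (qi * r + (qi - 1) * δ) • e' := by
        rw [mul_add, add_mul, mul_smul_comm, smul_mul_assoc, h.e_mul_gTwo_mul_e, mul_smul_comm,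
          mul_one, smul_mul_assoc, h.e_mul_self, smul_smul, smul_smul, add_smul]
    _ = qi • e' := by congr 1; linear_combination δ * hq - qi * hδ

@[simp] lemma lift_brThreeGens_fg (i : ℕ) :
    FreeAlgebra.lift R (brThreeGens g₁ g₂ e') (fg R i) =
      if i = 1 then g₁ else if i = 2 then g₂ else 0 := by
  simp [fg, brThreeGens]

@[simp] lemma lift_brThreeGens_fe : FreeAlgebra.lift R (brThreeGens g₁ g₂ e') (fe R) = e' := by
  simp [fe, brThreeGens]

lemma lift_brThreeGens_fgInv (i : ℕ) :
    FreeAlgebra.lift R (brThreeGens g₁ g₂ e') (fgInv R qi i) =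
      qi • FreeAlgebra.lift R (brThreeGens g₁ g₂ e') (fg R i) + (qi - 1) • (1 : A) := by
  simp only [fgInv, map_add, map_smul, map_one]

lemma BrThreeRelations.lift_eq_of_brRel (h : BrThreeRelations q r δ g₁ g₂ e')
    (hq : q * qi = 1) (hδ : (q - 1) * δ = r - 1)
    {a b : FreeAlgebra R BrGen} (hab : BrRel R 3 q qi r δ a b) :
    FreeAlgebra.lift R (brThreeGens g₁ g₂ e') a = FreeAlgebra.lift R (brThreeGens g₁ g₂ e') b := by
  induction hab with
  | zero i hi =>
    have hi1 : i ≠ 1 := by omega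
    have hi2 : i ≠ 2 := by omega
    simp [hi1, hi2]
  | quad i h1 h2 =>
    interval_cases i
    · simpa using h.sq_gOne
    · simpa using h.sq_gTwo
  | comm i j h1 h2 h3 => omega
  | braid i h1 h2 =>
    obtain rfl : i = 1 := by omega
    simpa using h.braid
  | e1 => simpa using h.e_mul_self
  | e2comm i h1 h2 => omega
  | e2g1 => simpa using h.e_mul_gOne
  | e2g2 => simpa using h.e_mul_gTwo_mul_e
  | e2g2inv => simpa [lift_brThreeGens_fgInv] using h.e_mul_gTwoInv_mul_e hq hδ
  | e3l h => omega
  | e3r h => omega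

theorem BrThreeRelations.exists_algHom (h : BrThreeRelations q r δ g₁ g₂ e')
    (hq : q * qi = 1) (hδ : (q - 1) * δ = r - 1) :
    ∃ π : QBr R 3 q qi r δ →ₐ[R] A,
      π (G R 3 q qi r δ 1) = g₁ ∧ π (G R 3 q qi r δ 2) = g₂ ∧ π (E R 3 q qi r δ) = e' := by
  refine ⟨RingQuot.liftAlgHom R ⟨FreeAlgebra.lift R (brThreeGens g₁ g₂ e'),
    fun _ _ hab => h.lift_eq_of_brRel hq hδ hab⟩, ?_, ?_, ?_⟩ <;>
  simp [G, E, RingQuot.liftAlgHom_mkAlgHom_apply]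

end UniversalProperty

section Matrices

variable {R : Type} [CommRing R]

def gOneMat (q : R) : Matrix (Fin 3) (Fin 3) R := !![q, 0, 0; 0, 0, q; 0, 1, q - 1]

def gTwoMat (q : R) : Matrix (Fin 3) (Fin 3) R := !![0, q, 0; 1, q - 1, 0; 0, 0, q]

def eMat (q r δ : R) : Matrix (Fin 3) (Fin 3) R := !![δ, r, r * q; 0, 0, 0; 0, 0, 0]

theorem brThreeRelations_mats (q r δ : R) :
    BrThreeRelations q r δ (gOneMat q) (gTwoMat q) (eMat q r δ) := by
  constructor <;> ext i j <;> fin_cases i <;> fin_cases j <;>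
    simp [gOneMat, gTwoMat, eMat, Matrix.mul_apply, Fin.sum_univ_succ] <;> ring

end Matrices

end qB

open qB in
theorem stmt4_general (R : Type) [CommRing R] (q qi r δ : R)
    (hq : q * qi = 1) (hδ : (q - 1) * δ = r - 1) :
    ∃ π : QBr R 3 q qi r δ →ₐ[R] Matrix (Fin 3) (Fin 3) R,
      π (G R 3 q qi r δ 1) = !![q, 0, 0; 0, 0, q; 0, 1, q - 1] ∧
      π (G R 3 q qi r δ 2) = !![0, q, 0; 1, q - 1, 0; 0, 0, q] ∧
      π (E R 3 q qi r δ) = !![δ, r, r * q; 0, 0, 0; 0, 0, 0] :=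
  (brThreeRelations_mats q r δ).exists_algHom hq hδ

open qB in
/-- the 3×3 matrix representation of the q-Brauer algebra `Br_3(r,q)`. -/
theorem stmt4 (R : Type) [CommRing R] (q qi r ri δ : R)
    (hq : q * qi = 1) (hr : r * ri = 1) (hδ : (q - 1) * δ = r - 1) :
    ∃ π : QBr R 3 q qi r δ →ₐ[R] Matrix (Fin 3) (Fin 3) R,
      π (G R 3 q qi r δ 1) = !![q, 0, 0; 0, 0, q; 0, 1, q - 1] ∧
      π (G R 3 q qi r δ 2) = !![0, q, 0; 1, q - 1, 0; 0, 0, q] ∧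
      π (E R 3 q qi r δ) = !![δ, r, r * q; 0, 0, 0; 0, 0, 0] :=
  stmt4_general R q qi r δ hq hδ
end
end

section
/- In the q-Brauer algebra Br_n(r,q), for all j, k with 1 ≤ j < k and 2k ≤ n, one has g_{2j−1} g_{2j} e_{(k)} = g_{2j+1} g_{2j} e_{(k)} and g_{2j−1}^{−1} g_{2j}^{−1} e_{(k)} = g_{2j+1}^{−1} g_{2j}^{−1} e_{(k)}. -/
noncomputable section

/-!
Write `W = g₂ g₃ g₁⁻¹ g₂⁻¹`, so that `e₍₂₎ = e W e` and relation (E3) reads `W e₍₂₎ = e₍₂₎`.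
For `j = 1` only this left factor of `e₍k₎` matters. Inserting `W` in front of `e₍₂₎` gives the
identity for the inverses at once. Expanding `e g₂ W e₍₂₎` once by (E3) and once by the quadratic
relation for `g₂` gives `g₃ e₍₂₎ = q e₍₂₎`; since `W` conjugates `g₁` to `g₃`, also
`g₁ e₍₂₎ = q e₍₂₎`, and writing `g₂` through `g₂⁻¹` turns the inverse identity into the one for
the `g`'s. For `j > 1`, the braid relations show that the factor `e g₂ ⋯ g₂ₖ₊₁ g₁⁻¹ ⋯ g₂ₖ⁻¹` of
`e₍k+1₎` conjugates `g i` to `g (i + 2)`, which reduces `(j + 1, k + 1)` to `(j, k)`.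
-/

namespace qB

variable {R : Type} [CommRing R] {n : ℕ} {q qi r δ : R}

local notation "Br" => QBr R n q qi r δ
local notation "g" => G R n q qi r δ
local notation "g⁻¹" => GInv R n q qi r δ
local notation "e" => E R n q qi r δ
local notation "g↗" => ga R n q qi r δ
local notation "g⁻¹↗" => gaInv R n q qi r δ
local notation "e₍" k "₎" => ek R n q qi r δ k

theorem G_eq_zero {i : ℕ} (h : i = 0 ∨ n ≤ i) : g i = 0 := by
  simpa [G] using
    RingQuot.mkAlgHom_rel R (BrRel.zero (q := q) (qi := qi) (r := r) (δ := δ) i h)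

theorem G_mul_self {i : ℕ} (h1 : 1 ≤ i) (h2 : i < n) : g i * g i = (q - 1) • g i + q • 1 := by
  simpa [G] using
    RingQuot.mkAlgHom_rel R (BrRel.quad (qi := qi) (r := r) (δ := δ) i h1 h2)

theorem commute_G {i j : ℕ} (h : i + 1 < j) : Commute (g i) (g j) := by
  rcases Nat.eq_zero_or_pos i with rfl | hi
  · simp [G_eq_zero]
  rcases lt_or_ge j n with hj | hj
  · simpa [G, commute_iff_eq] using
      RingQuot.mkAlgHom_rel R (BrRel.comm (q := q) (qi := qi) (r := r) (δ := δ) i j hi h hj)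
  · simp [G_eq_zero (Or.inr hj)]

theorem G_braid {i : ℕ} (h1 : 1 ≤ i) (h2 : i + 1 < n) :
    g i * g (i + 1) * g i = g (i + 1) * g i * g (i + 1) := by
  simpa [G] using
    RingQuot.mkAlgHom_rel R (BrRel.braid (q := q) (qi := qi) (r := r) (δ := δ) i h1 h2)

theorem E_mul_self : e * e = δ • e := by
  simpa [E] using
    RingQuot.mkAlgHom_rel R (BrRel.e1 (n := n) (q := q) (qi := qi) (r := r) (δ := δ))

theorem commute_E_G {i : ℕ} (h : 3 ≤ i) : Commute e (g i) := by
  rcases lt_or_ge i n with hi | hi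
  · simpa [G, E, commute_iff_eq] using
      RingQuot.mkAlgHom_rel R (BrRel.e2comm (q := q) (qi := qi) (r := r) (δ := δ) i h hi)
  · simp [G_eq_zero (Or.inr hi)]

theorem E_mul_G_one (h : 2 ≤ n) : e * g 1 = q • e := by
  simpa [G, E] using
    RingQuot.mkAlgHom_rel R (BrRel.e2g1 (q := q) (qi := qi) (r := r) (δ := δ) h)

theorem E_mul_G_two_mul_E (h : 3 ≤ n) : e * g 2 * e = r • e := by
  simpa [G, E] using
    RingQuot.mkAlgHom_rel R (BrRel.e2g2 (q := q) (qi := qi) (r := r) (δ := δ) h)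

theorem E_mul_GInv_two_mul_E (h : 3 ≤ n) : e * g⁻¹ 2 * e = qi • e := by
  simpa [GInv, E] using
    RingQuot.mkAlgHom_rel R (BrRel.e2g2inv (q := q) (qi := qi) (r := r) (δ := δ) h)

theorem GInv_eq (i : ℕ) : g⁻¹ i = qi • g i + (qi - 1) • 1 := by
  simp [GInv, G, fgInv]

theorem G_mul_GInv (hq : q * qi = 1) {i : ℕ} (h1 : 1 ≤ i) (h2 : i < n) : g i * g⁻¹ i = 1 := by
  rw [GInv_eq, mul_add, mul_smul_comm, mul_smul_comm, G_mul_self h1 h2, mul_one]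
  match_scalars <;> linear_combination hq

theorem GInv_mul_G (hq : q * qi = 1) {i : ℕ} (h1 : 1 ≤ i) (h2 : i < n) : g⁻¹ i * g i = 1 := by
  rw [GInv_eq, add_mul, smul_mul_assoc, smul_mul_assoc, G_mul_self h1 h2, one_mul]
  match_scalars <;> linear_combination hq

def unitG (hq : q * qi = 1) {i : ℕ} (h1 : 1 ≤ i) (h2 : i < n) : Brˣ :=
  ⟨g i, g⁻¹ i, G_mul_GInv hq h1 h2, GInv_mul_G hq h1 h2⟩

theorem G_eq_GInv (hq : q * qi = 1) (i : ℕ) : g i = q • g⁻¹ i + (q - 1) • 1 := by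
  rw [GInv_eq]
  match_scalars <;> linear_combination -hq

theorem semiconjBy_GInv {a : Br} {i j : ℕ} (h : SemiconjBy a (g i) (g j)) :
    SemiconjBy a (g⁻¹ i) (g⁻¹ j) := by
  rw [GInv_eq, GInv_eq]
  exact (h.smul_right qi).add_right ((SemiconjBy.one_right a).smul_right _)

theorem semiconjBy_G_mul_G {i : ℕ} (h1 : 1 ≤ i) (h2 : i + 1 < n) :
    SemiconjBy (g i * g (i + 1)) (g i) (g (i + 1)) := by
  simp only [SemiconjBy, ← mul_assoc, G_braid h1 h2]

theorem semiconjBy_GInv_mul_GInv (hq : q * qi = 1) {i : ℕ} (h1 : 1 ≤ i) (h2 : i + 1 < n) :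
    SemiconjBy (g⁻¹ i * g⁻¹ (i + 1)) (g i) (g (i + 1)) := by
  have h : SemiconjBy ((unitG hq i.succ_pos h2 * unitG hq h1 (Nat.lt_of_succ_lt h2) : Brˣ) : Br)
      (g (i + 1)) (g i) := by
    simp only [SemiconjBy, Units.val_mul, unitG, ← mul_assoc, G_braid h1 h2]
  simpa [unitG] using h.units_inv_symm_left

theorem prod_map_range'_eq_mul {M : Type*} [Monoid M] (f : ℕ → M) {a b c : ℕ} (hab : a ≤ b + 1)
    (hbc : b ≤ c) :
    ((List.range' a (c + 1 - a)).map f).prod =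
      ((List.range' a (b + 1 - a)).map f).prod *
        ((List.range' (b + 1) (c + 1 - (b + 1))).map f).prod := by
  obtain ⟨d, hd⟩ : ∃ d, b + 1 = a + d := ⟨b + 1 - a, by omega⟩
  rw [hd, Nat.add_sub_cancel_left, ← List.prod_append, ← List.map_append, List.range'_append_1]
  congr 3
  omega

theorem commute_prod_map_range' {M : Type*} [Monoid M] (f : ℕ → M) {a b : ℕ} {x : M}
    (h : ∀ m, a ≤ m → m ≤ b → Commute (f m) x) :
    Commute ((List.range' a (b + 1 - a)).map f).prod x :=
  Commute.list_prod_left _ _ fun y hy => by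
    obtain ⟨m, hm, rfl⟩ := List.mem_map.1 hy
    rw [List.mem_range'_1] at hm
    exact h m (by omega) (by omega)

theorem ga_append {a b c : ℕ} (hab : a ≤ b + 1) (hbc : b ≤ c) :
    g↗ a c = g↗ a b * g↗ (b + 1) c :=
  prod_map_range'_eq_mul _ hab hbc

theorem gaInv_append {a b c : ℕ} (hab : a ≤ b + 1) (hbc : b ≤ c) :
    g⁻¹↗ a c = g⁻¹↗ a b * g⁻¹↗ (b + 1) c :=
  prod_map_range'_eq_mul _ hab hbc

theorem ga_self_succ (i : ℕ) : g↗ i (i + 1) = g i * g (i + 1) := by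
  simp [ga, show i + 1 + 1 - i = 2 by omega, List.range']

theorem gaInv_self_succ (i : ℕ) : g⁻¹↗ i (i + 1) = g⁻¹ i * g⁻¹ (i + 1) := by
  simp [gaInv, show i + 1 + 1 - i = 2 by omega, List.range']

theorem commute_ga {a b : ℕ} {x : Br} (h : ∀ m, a ≤ m → m ≤ b → Commute (g m) x) :
    Commute (g↗ a b) x :=
  commute_prod_map_range' _ h

theorem commute_gaInv {a b : ℕ} {x : Br} (h : ∀ m, a ≤ m → m ≤ b → Commute (g⁻¹ m) x) :
    Commute (g⁻¹↗ a b) x :=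
  commute_prod_map_range' _ h

theorem commute_GInv_G {i j : ℕ} (h : i + 1 < j ∨ j + 1 < i) : Commute (g⁻¹ i) (g j) := by
  have hc : Commute (g j) (g i) := by
    rcases h with h | h
    exacts [(commute_G h).symm, commute_G h]
  exact (semiconjBy_GInv hc).symm

theorem semiconjBy_ga {a b i : ℕ} (h1 : 1 ≤ i) (hai : a ≤ i) (hib : i < b) (hbn : b < n) :
    SemiconjBy (g↗ a b) (g i) (g (i + 1)) := by
  obtain ⟨i, rfl⟩ : ∃ i', i = i' + 1 := ⟨i - 1, by omega⟩
  rw [ga_append (b := i) (by omega) (by omega),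
    ga_append (a := i + 1) (b := i + 2) (by omega) hib, ga_self_succ]
  have hlow : Commute (g↗ a i) (g (i + 2)) := commute_ga fun m _ hm => commute_G (by omega)
  have hhigh : Commute (g↗ (i + 2 + 1) b) (g (i + 1)) :=
    commute_ga fun m hm _ => (commute_G (by omega)).symm
  exact SemiconjBy.mul_left hlow ((semiconjBy_G_mul_G h1 (by omega)).mul_left hhigh)

theorem semiconjBy_gaInv (hq : q * qi = 1) {a b i : ℕ} (h1 : 1 ≤ i) (hai : a ≤ i) (hib : i < b)
    (hbn : b < n) : SemiconjBy (g⁻¹↗ a b) (g i) (g (i + 1)) := by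
  obtain ⟨i, rfl⟩ : ∃ i', i = i' + 1 := ⟨i - 1, by omega⟩
  rw [gaInv_append (b := i) (by omega) (by omega),
    gaInv_append (a := i + 1) (b := i + 2) (by omega) hib, gaInv_self_succ]
  have hlow : Commute (g⁻¹↗ a i) (g (i + 2)) :=
    commute_gaInv fun m _ hm => commute_GInv_G (by omega)
  have hhigh : Commute (g⁻¹↗ (i + 2 + 1) b) (g (i + 1)) :=
    commute_gaInv fun m hm _ => commute_GInv_G (by omega)
  exact SemiconjBy.mul_left hlow ((semiconjBy_GInv_mul_GInv hq h1 (by omega)).mul_left hhigh)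

local notation "W" => g↗ 2 3 * g⁻¹↗ 1 2

theorem W_eq : W = g 2 * g 3 * g⁻¹ 1 * g⁻¹ 2 := by
  rw [ga_self_succ, gaInv_self_succ, ← mul_assoc]

theorem ek_one : e₍1₎ = e := by
  simp [ek, ga, gaInv]

theorem ek_two : e₍2₎ = e * W * e := by
  rw [show e₍2₎ = e * g↗ 2 3 * g⁻¹↗ 1 2 * e₍1₎ from rfl, ek_one, mul_assoc e]

theorem W_mul_ek_two (h : 4 ≤ n) : W * e₍2₎ = e₍2₎ := by
  simpa [G, E, GInv, fE2w, ek_two, W_eq] using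
    RingQuot.mkAlgHom_rel R (BrRel.e3l (q := q) (qi := qi) (r := r) (δ := δ) h)

theorem exists_ek_eq_ek_two_mul {k : ℕ} (hk : 2 ≤ k) : ∃ y, e₍k₎ = e₍2₎ * y := by
  obtain ⟨m, rfl⟩ : ∃ m, k = m + 2 := ⟨k - 2, by omega⟩
  have hAV : Commute (g↗ 4 (2 * m + 3)) (g⁻¹↗ 1 2) :=
    commute_ga fun i hi _ => (commute_gaInv fun j _ hj => commute_GInv_G (by omega)).symm
  have hAE : Commute (g↗ 4 (2 * m + 3)) e :=
    commute_ga fun i hi _ => (commute_E_G (by omega)).symm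
  have hBE : Commute (g⁻¹↗ 3 (2 * m + 2)) e :=
    commute_gaInv fun i hi _ => (semiconjBy_GInv (commute_E_G (by omega))).symm
  have hek : e₍m + 2₎ = e * g↗ 2 (2 * m + 3) * g⁻¹↗ 1 (2 * m + 2) *
      (e * g↗ 2 (2 * m + 1) * g⁻¹↗ 1 (2 * m) * e₍m₎) := rfl
  refine ⟨g↗ 4 (2 * m + 3) * g⁻¹↗ 3 (2 * m + 2) * (g↗ 2 (2 * m + 1) * g⁻¹↗ 1 (2 * m) * e₍m₎),
    ?_⟩
  rw [hek, ek_two, ga_append (b := 3) (by omega) (by omega),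
    gaInv_append (b := 2) (by omega) (by omega)]
  simp only [mul_assoc, hAV.left_comm, hAE.left_comm, hBE.left_comm]

theorem mul_ek_eq_of_mul_ek_two {x y : Br} (h : x * e₍2₎ = y * e₍2₎) {k : ℕ} (hk : 2 ≤ k) :
    x * e₍k₎ = y * e₍k₎ := by
  obtain ⟨z, hz⟩ : ∃ z, e₍k₎ = e₍2₎ * z := exists_ek_eq_ek_two_mul hk
  rw [hz, ← mul_assoc, ← mul_assoc, h]

theorem E_mul_GInv_one (hq : q * qi = 1) (h : 2 ≤ n) : e * g⁻¹ 1 = qi • e := by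
  rw [GInv_eq, mul_add, mul_smul_comm, mul_smul_comm, E_mul_G_one h, mul_one, smul_smul]
  match_scalars
  linear_combination hq

theorem G_three_mul_ek_two (hq : q * qi = 1) (hδ : (q - 1) * δ = r - 1) (h : 4 ≤ n) :
    g 3 * e₍2₎ = q • e₍2₎ := by
  have hE : e * e₍2₎ = δ • e₍2₎ := by
    rw [ek_two]; simp only [← mul_assoc, E_mul_self, smul_mul_assoc]
  have hG2 : e * (g 2 * e₍2₎) = r • e₍2₎ := by
    rw [ek_two]; simp only [← mul_assoc, E_mul_G_two_mul_E (by omega : 3 ≤ n), smul_mul_assoc]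
  have hGInv2 : e * (g⁻¹ 2 * e₍2₎) = qi • e₍2₎ := by
    rw [ek_two]; simp only [← mul_assoc, E_mul_GInv_two_mul_E (by omega : 3 ≤ n), smul_mul_assoc]
  have hW : g 2 * g 3 * g⁻¹ 1 * g⁻¹ 2 * e₍2₎ = e₍2₎ := by rw [← W_eq]; exact W_mul_ek_two h
  have key : r • e₍2₎ = ((q - 1) * δ) • e₍2₎ + qi • (g 3 * e₍2₎) :=
    calc r • e₍2₎ = e * (g 2 * (g 2 * g 3 * g⁻¹ 1 * g⁻¹ 2 * e₍2₎)) := by rw [hW, hG2]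
      _ = e * ((g 2 * g 2) * (g 3 * (g⁻¹ 1 * (g⁻¹ 2 * e₍2₎)))) := by simp only [mul_assoc]
      _ = (q - 1) • (e * (g 2 * g 3 * g⁻¹ 1 * g⁻¹ 2 * e₍2₎)) +
            q • (g 3 * ((e * g⁻¹ 1) * (g⁻¹ 2 * e₍2₎))) := by
        rw [G_mul_self (by omega) (by omega)]
        simp only [add_mul, mul_add, smul_mul_assoc, mul_smul_comm, one_mul, mul_assoc,
          (commute_E_G (le_refl 3)).left_comm]
      _ = ((q - 1) * δ) • e₍2₎ + qi • (g 3 * e₍2₎) := by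
        rw [hW, hE, E_mul_GInv_one hq (by omega), smul_mul_assoc, hGInv2]
        simp only [mul_smul_comm, smul_smul]
        match_scalars
        · ring
        · linear_combination qi * hq
  have hqi : qi • (g 3 * e₍2₎) = e₍2₎ := by
    linear_combination (norm := module) -key - hδ • e₍2₎
  conv_rhs => rw [← hqi, smul_smul, hq, one_smul]

theorem semiconjBy_W (hq : q * qi = 1) (h : 4 ≤ n) : SemiconjBy W (g 1) (g 3) :=
  SemiconjBy.mul_left (semiconjBy_ga (by omega) le_rfl (by omega) (by omega))
    (semiconjBy_gaInv hq le_rfl le_rfl (by omega) (by omega))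

theorem isUnit_W (hq : q * qi = 1) (h : 4 ≤ n) : IsUnit W := by
  rw [W_eq]
  exact (((unitG hq (i := 2) (by omega) (by omega)).isUnit.mul
    (unitG hq (i := 3) (by omega) (by omega)).isUnit).mul
    (unitG hq (i := 1) le_rfl (by omega))⁻¹.isUnit).mul
    (unitG hq (i := 2) (by omega) (by omega))⁻¹.isUnit

theorem G_one_mul_ek_two (hq : q * qi = 1) (hδ : (q - 1) * δ = r - 1) (h : 4 ≤ n) :
    g 1 * e₍2₎ = q • e₍2₎ :=
  (isUnit_W hq h).mul_left_cancel <| by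
    rw [← mul_assoc, (semiconjBy_W hq h).eq, mul_assoc, W_mul_ek_two h, mul_smul_comm,
      W_mul_ek_two h, G_three_mul_ek_two hq hδ h]

theorem GInv_mul_G_mul (hq : q * qi = 1) {i : ℕ} (h1 : 1 ≤ i) (h2 : i < n) (x : Br) :
    g⁻¹ i * (g i * x) = x := by
  rw [← mul_assoc, GInv_mul_G hq h1 h2, one_mul]

theorem GInv_one_mul_GInv_two_mul_ek_two (hq : q * qi = 1) (h : 4 ≤ n) :
    g⁻¹ 1 * g⁻¹ 2 * e₍2₎ = g⁻¹ 3 * g⁻¹ 2 * e₍2₎ := by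
  conv_rhs => rw [← W_mul_ek_two h, W_eq]
  simp only [mul_assoc, GInv_mul_G_mul hq (i := 2) (by omega) (show 2 < n by omega),
    GInv_mul_G_mul hq (i := 3) (by omega) (show 3 < n by omega)]

theorem G_one_mul_G_two_mul_ek_two (hq : q * qi = 1) (hδ : (q - 1) * δ = r - 1) (h : 4 ≤ n) :
    g 1 * g 2 * e₍2₎ = g 3 * g 2 * e₍2₎ := by
  have hGInv : g 1 * (g⁻¹ 2 * e₍2₎) = g 3 * (g⁻¹ 2 * e₍2₎) := by
    simp only [G_eq_GInv hq 1, G_eq_GInv hq 3, add_mul, smul_mul_assoc, one_mul, ← mul_assoc,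
      GInv_one_mul_GInv_two_mul_ek_two hq h]
  have hG : g 1 * e₍2₎ = g 3 * e₍2₎ := by
    rw [G_one_mul_ek_two hq hδ h, G_three_mul_ek_two hq hδ h]
  simp only [G_eq_GInv hq 2, mul_add, add_mul, mul_smul_comm, smul_mul_assoc, mul_one, mul_assoc,
    hGInv, hG]

theorem semiconjBy_ek_succ_factor (hq : q * qi = 1) {k i : ℕ} (hkn : 2 * k + 1 < n) (h1 : 1 ≤ i)
    (h2 : i < 2 * k) :
    SemiconjBy (e * g↗ 2 (2 * k + 1) * g⁻¹↗ 1 (2 * k)) (g i) (g (i + 2)) :=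
  SemiconjBy.mul_left
    (SemiconjBy.mul_left (commute_E_G (by omega))
      (semiconjBy_ga (by omega) (by omega) (by omega) hkn))
    (semiconjBy_gaInv hq h1 h1 h2 (by omega))

theorem mul_mul_mul_eq_of_semiconjBy {M : Type*} [Monoid M] {a b x y z x' y' z' : M}
    (hx : SemiconjBy a x x') (hy : SemiconjBy a y y') (hz : SemiconjBy a z z')
    (h : x * y * b = z * y * b) : x' * y' * (a * b) = z' * y' * (a * b) := by
  have push : ∀ {u u' : M}, SemiconjBy a u u' → u' * y' * (a * b) = a * (u * y * b) :=
    fun {u u'} hu => calc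
      u' * y' * (a * b) = u' * (y' * a) * b := by simp only [mul_assoc]
      _ = u' * a * y * b := by rw [← hy.eq]; simp only [mul_assoc]
      _ = a * (u * y * b) := by rw [← hu.eq]; simp only [mul_assoc]
  rw [push hx, push hz, h]

theorem mul_mul_ek_eq_of_base (hq : q * qi = 1) {f : ℕ → Br}
    (hf : ∀ {a : Br} {i j : ℕ}, SemiconjBy a (g i) (g j) → SemiconjBy a (f i) (f j))
    (hbase : ∀ k, 2 ≤ k → 2 * k ≤ n → f 1 * f 2 * e₍k₎ = f 3 * f 2 * e₍k₎)
    {j k : ℕ} (h1 : 1 ≤ j) (h2 : j < k) (h3 : 2 * k ≤ n) :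
    f (2 * j - 1) * f (2 * j) * e₍k₎ = f (2 * j + 1) * f (2 * j) * e₍k₎ := by
  induction j, h1 using Nat.le_induction generalizing k with
  | base => exact hbase k (by omega) h3
  | succ j hj ih =>
    obtain ⟨k, rfl⟩ : ∃ k', k = k' + 1 := ⟨k - 1, by omega⟩
    have hP : ∀ i, 1 ≤ i → i < 2 * k →
        SemiconjBy (e * g↗ 2 (2 * k + 1) * g⁻¹↗ 1 (2 * k)) (f i) (f (i + 2)) :=
      fun i hi1 hi2 => hf (semiconjBy_ek_succ_factor hq (by omega) hi1 hi2)
    have := mul_mul_mul_eq_of_semiconjBy (hP (2 * j - 1) (by omega) (by omega))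
      (hP (2 * j) (by omega) (by omega)) (hP (2 * j + 1) (by omega) (by omega))
      (ih (k := k) (by omega) (by omega))
    rwa [show 2 * j - 1 + 2 = 2 * (j + 1) - 1 by omega, show 2 * j + 2 = 2 * (j + 1) by omega,
      show 2 * j + 1 + 2 = 2 * (j + 1) + 1 by omega] at this

end qB

open qB in
theorem stmt7_general (R : Type) [CommRing R] (n : ℕ) (q qi r δ : R)
    (hq : q * qi = 1) (hδ : (q - 1) * δ = r - 1)
    (j k : ℕ) (h1 : 1 ≤ j) (h2 : j < k) (h3 : 2 * k ≤ n) :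
    G R n q qi r δ (2 * j - 1) * G R n q qi r δ (2 * j) * ek R n q qi r δ k =
      G R n q qi r δ (2 * j + 1) * G R n q qi r δ (2 * j) * ek R n q qi r δ k ∧
    GInv R n q qi r δ (2 * j - 1) * GInv R n q qi r δ (2 * j) * ek R n q qi r δ k =
      GInv R n q qi r δ (2 * j + 1) * GInv R n q qi r δ (2 * j) * ek R n q qi r δ k :=
  ⟨mul_mul_ek_eq_of_base hq id
      (fun _ hk hkn => mul_ek_eq_of_mul_ek_two (G_one_mul_G_two_mul_ek_two hq hδ (by omega)) hk)
      h1 h2 h3,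
    mul_mul_ek_eq_of_base hq semiconjBy_GInv
      (fun _ hk hkn => mul_ek_eq_of_mul_ek_two (GInv_one_mul_GInv_two_mul_ek_two hq (by omega)) hk)
      h1 h2 h3⟩

open qB in
/-- `g_{2j-1} g_{2j} e_(k) = g_{2j+1} g_{2j} e_(k)` and the inverse version,
for `1 ≤ j < k` and `2k ≤ n`. -/
theorem stmt7 (R : Type) [CommRing R] (n : ℕ) (q qi r ri δ : R)
    (hq : q * qi = 1) (hr : r * ri = 1) (hδ : (q - 1) * δ = r - 1)
    (j k : ℕ) (h1 : 1 ≤ j) (h2 : j < k) (h3 : 2 * k ≤ n) :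
    G R n q qi r δ (2 * j - 1) * G R n q qi r δ (2 * j) * ek R n q qi r δ k =
      G R n q qi r δ (2 * j + 1) * G R n q qi r δ (2 * j) * ek R n q qi r δ k ∧
    GInv R n q qi r δ (2 * j - 1) * GInv R n q qi r δ (2 * j) * ek R n q qi r δ k =
      GInv R n q qi r δ (2 * j + 1) * GInv R n q qi r δ (2 * j) * ek R n q qi r δ k :=
  stmt7_general R n q qi r δ hq hδ j k h1 h2 h3
end
end

section
/- In the q-Brauer algebra Br_n(r,q), for k ≥ 1 with 2k + 2 ≤ n and indices j_1, j_2 with 2k ≤ j_1 ≤ n−1 and 2k+1 ≤ j_2 ≤ n−1, one has e · (g_2 g_3 ⋯ g_{j_2}) · (g_1^{−1} g_2^{−1} ⋯ g_{j_1}^{−1}) · e_{(k)} = e_{(k+1)} · (g_{2k+2} g_{2k+3} ⋯ g_{j_2}) · (g_{2k+1}^{−1} g_{2k+2}^{−1} ⋯ g_{j_1}^{−1}), where an ascending product g_a g_{a+1} ⋯ g_b (or of inverses) with b < a is interpreted as 1. -/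
noncomputable section

/-!
Split `g_2 ⋯ g_{j_2}` after `g_{2k+1}` and `g_1⁻¹ ⋯ g_{j_1}⁻¹` after `g_{2k}⁻¹`. The two tails
only involve generators `g_i` with `i ≥ 2k+1`; these commute with `g_1, …, g_{2k}` by the far
commutativity relations and with `e_(k)`, whose letters are `e` and `g_i` with `i ≤ 2k - 1`.
Moving the tails to the far right leaves `e (g_2 ⋯ g_{2k+1}) (g_1⁻¹ ⋯ g_{2k}⁻¹) e_(k) = e_(k+1)`.
-/

lemma List.prod_map_range'_eq_mul {M : Type*} [Monoid M] (f : ℕ → M) {a c b : ℕ}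
    (hac : a ≤ c + 1) (hcb : c ≤ b) :
    ((List.range' a (b + 1 - a)).map f).prod =
      ((List.range' a (c + 1 - a)).map f).prod *
        ((List.range' (c + 1) (b + 1 - (c + 1))).map f).prod := by
  have h := List.range'_append_1 (s := a) (m := c + 1 - a) (n := b - c)
  rw [show a + (c + 1 - a) = c + 1 by omega, show c + 1 - a + (b - c) = b + 1 - a by omega] at h
  rw [← h, show b + 1 - (c + 1) = b - c by omega, List.map_append, List.prod_append]

lemma List.commute_prod_map_range' {M : Type*} [Monoid M] {x : M} (f : ℕ → M) {a b : ℕ}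
    (h : ∀ i, a ≤ i → i ≤ b → Commute x (f i)) :
    Commute x ((List.range' a (b + 1 - a)).map f).prod := by
  refine Commute.list_prod_right _ _ fun y hy => ?_
  obtain ⟨i, hi, rfl⟩ := List.mem_map.1 hy
  rw [List.mem_range'_1] at hi
  exact h i hi.1 (by omega)

namespace qB

variable {R : Type} [CommRing R] {n : ℕ} {q qi r δ : R}

lemma G_commute_G {i j : ℕ} (hi : 1 ≤ i) (hij : i + 1 < j) (hj : j < n) :
    Commute (G R n q qi r δ i) (G R n q qi r δ j) := by
  have h := RingQuot.mkAlgHom_rel R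
    (BrRel.comm (q := q) (qi := qi) (r := r) (δ := δ) i j hi hij hj)
  rw [map_mul, map_mul] at h
  exact h

lemma E_commute_G {i : ℕ} (hi : 3 ≤ i) (hin : i < n) :
    Commute (E R n q qi r δ) (G R n q qi r δ i) := by
  have h := RingQuot.mkAlgHom_rel R
    (BrRel.e2comm (q := q) (qi := qi) (r := r) (δ := δ) i hi hin)
  rw [map_mul, map_mul] at h
  exact h

lemma GInv_eq_s12 (i : ℕ) : GInv R n q qi r δ i = qi • G R n q qi r δ i + (qi - 1) • 1 := by
  simp only [GInv, fgInv, map_add, map_smul, map_one, G]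

lemma commute_GInv_of_commute_G {x : QBr R n q qi r δ} {i : ℕ} (h : Commute x (G R n q qi r δ i)) :
    Commute x (GInv R n q qi r δ i) := by
  rw [GInv_eq_s12]
  exact (h.smul_right qi).add_right ((Commute.one_right x).smul_right (qi - 1))

lemma commute_ga_s12 {x : QBr R n q qi r δ} {a b : ℕ}
    (h : ∀ i, a ≤ i → i ≤ b → Commute x (G R n q qi r δ i)) :
    Commute x (ga R n q qi r δ a b) :=
  List.commute_prod_map_range' _ h

lemma commute_gaInv_s12 {x : QBr R n q qi r δ} {a b : ℕ}
    (h : ∀ i, a ≤ i → i ≤ b → Commute x (G R n q qi r δ i)) :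
    Commute x (gaInv R n q qi r δ a b) :=
  List.commute_prod_map_range' _ fun i hai hib => commute_GInv_of_commute_G (h i hai hib)

lemma ga_eq_mul {a c b : ℕ} (hac : a ≤ c + 1) (hcb : c ≤ b) :
    ga R n q qi r δ a b = ga R n q qi r δ a c * ga R n q qi r δ (c + 1) b :=
  List.prod_map_range'_eq_mul _ hac hcb

lemma gaInv_eq_mul {a c b : ℕ} (hac : a ≤ c + 1) (hcb : c ≤ b) :
    gaInv R n q qi r δ a b = gaInv R n q qi r δ a c * gaInv R n q qi r δ (c + 1) b :=
  List.prod_map_range'_eq_mul _ hac hcb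

lemma ek_commute_G (k : ℕ) {j : ℕ} (hkj : 2 * k + 1 ≤ j) (hjn : j < n) :
    Commute (ek R n q qi r δ k) (G R n q qi r δ j) := by
  induction k with
  | zero => exact Commute.one_left _
  | succ k ih =>
    have hG : ∀ i, 1 ≤ i → i ≤ 2 * k + 1 → Commute (G R n q qi r δ j) (G R n q qi r δ i) :=
      fun i hi hik => (G_commute_G hi (by omega) hjn).symm
    refine (((E_commute_G (by omega) hjn).mul_left ?_).mul_left ?_).mul_left (ih (by omega))
    · exact (commute_ga_s12 fun i hi hik => hG i (by omega) hik).symm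
    · exact (commute_gaInv_s12 fun i hi hik => hG i hi (by omega)).symm

end qB

open qB in
theorem stmt12_general (R : Type) [CommRing R] (n : ℕ) (q qi r δ : R)
    (k j1 j2 : ℕ)
    (hj1 : 2 * k ≤ j1) (hj1' : j1 ≤ n - 1) (hj2 : 2 * k + 1 ≤ j2) (hj2' : j2 ≤ n - 1) :
    E R n q qi r δ * ga R n q qi r δ 2 j2 * gaInv R n q qi r δ 1 j1 * ek R n q qi r δ k =
      ek R n q qi r δ (k + 1) * ga R n q qi r δ (2 * k + 2) j2 *
        gaInv R n q qi r δ (2 * k + 1) j1 := by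
  have hga : ga R n q qi r δ 2 j2 =
      ga R n q qi r δ 2 (2 * k + 1) * ga R n q qi r δ (2 * k + 2) j2 :=
    ga_eq_mul (by omega) hj2
  have hgaInv : gaInv R n q qi r δ 1 j1 =
      gaInv R n q qi r δ 1 (2 * k) * gaInv R n q qi r δ (2 * k + 1) j1 :=
    gaInv_eq_mul (by omega) hj1
  have hCD : Commute (ga R n q qi r δ (2 * k + 2) j2) (gaInv R n q qi r δ 1 (2 * k)) :=
    commute_gaInv_s12 fun m hm hmk =>
      (commute_ga_s12 fun i hi hij => G_commute_G hm (by omega) (by omega)).symm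
  have hCK : Commute (ga R n q qi r δ (2 * k + 2) j2) (ek R n q qi r δ k) :=
    (commute_ga_s12 fun i hi hij => ek_commute_G k (by omega) (by omega)).symm
  have hFK : Commute (gaInv R n q qi r δ (2 * k + 1) j1) (ek R n q qi r δ k) :=
    (commute_gaInv_s12 fun i hi hij => ek_commute_G k (by omega) (by omega)).symm
  rw [hga, hgaInv, ek]
  simp only [mul_assoc]
  rw [hFK.eq, hCD.left_comm, hCK.left_comm]

open qB in
/-- `e (g_2 ⋯ g_{j_2})(g_1⁻¹ ⋯ g_{j_1}⁻¹) e_(k)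
  = e_(k+1) (g_{2k+2} ⋯ g_{j_2})(g_{2k+1}⁻¹ ⋯ g_{j_1}⁻¹)`. -/
theorem stmt12 (R : Type) [CommRing R] (n : ℕ) (q qi r ri δ : R)
    (hq : q * qi = 1) (hr : r * ri = 1) (hδ : (q - 1) * δ = r - 1)
    (k j1 j2 : ℕ) (hk : 1 ≤ k) (hn : 2 * k + 2 ≤ n)
    (hj1 : 2 * k ≤ j1) (hj1' : j1 ≤ n - 1) (hj2 : 2 * k + 1 ≤ j2) (hj2' : j2 ≤ n - 1) :
    E R n q qi r δ * ga R n q qi r δ 2 j2 * gaInv R n q qi r δ 1 j1 * ek R n q qi r δ k =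
      ek R n q qi r δ (k + 1) * ga R n q qi r δ (2 * k + 2) j2 *
        gaInv R n q qi r δ (2 * k + 1) j1 :=
  stmt12_general R n q qi r δ k j1 j2 hj1 hj1' hj2 hj2'
end
end
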